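/- Let W, D, T be random variables on a common probability space taking values in finite sets, with p(W=w)>0 for all w in the range of W, and suppose D and T are conditionally independent given W. Let d, t be values with p(D=d)>0, p(T=t)>0 and p(D=d,T=t)>0, and suppose p(W=w | D=d) > 0 and p(W=w | T=t) > 0 whenever p(W=w | D=d, T=t) > 0. Then log( p(D=d, T=t) / (p(D=d)·p(T=t)) ) = KL( p(W=· | D=d, T=t) ‖ p(W=·) ) − KL( p(W=· | D=d, T=t) ‖ p(W=· | D=d) ) − KL( p(W=· | D=d, T=t) ‖ p(W=· | T=t) ). -/

import Mathlib

open Finset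
open scoped Classical

/-- Probability of an event under a pmf on a finite sample space. -/
noncomputable def pr {Ω : Type*} [Fintype Ω] (p : Ω → ℝ) (E : Ω → Prop) : ℝ :=
  ∑ ω, if E ω then p ω else 0

/-- Conditional probability `p(E | F)`. -/
noncomputable def cpr {Ω : Type*} [Fintype Ω] (p : Ω → ℝ) (E F : Ω → Prop) : ℝ :=
  pr p (fun ω => E ω ∧ F ω) / pr p F

/-- `X` and `Y` are conditionally independent given `Z`. -/
def CondIndepRV {Ω A B C : Type*} [Fintype Ω] (p : Ω → ℝ)
    (X : Ω → A) (Y : Ω → B) (Z : Ω → C) : Prop :=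
  ∀ x y z, 0 < pr p (fun ω => Z ω = z) →
    cpr p (fun ω => X ω = x ∧ Y ω = y) (fun ω => Z ω = z) =
      cpr p (fun ω => X ω = x) (fun ω => Z ω = z) *
      cpr p (fun ω => Y ω = y) (fun ω => Z ω = z)

/-- KL divergence between two pmfs on a finite set. -/
noncomputable def klD {A : Type*} [Fintype A] (q r : A → ℝ) : ℝ :=
  ∑ w, if 0 < q w then q w * Real.log (q w / r w) else 0

/-!
Write `q = p(W = · | D = d, T = t)`. Wherever `q w > 0`, the three logarithms combine to
`log (p(w | d) p(w | t) / (q w · p(w)))`, and conditional independence,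
`p(w, d, t) p(w) = p(w, d) p(w, t)`, turns this into the constant
`log (p(d, t) / (p(d) p(t)))`; every probability involved is positive there, since it
dominates `p(w, d, t) > 0`. Averaging a constant against the probability vector `q` returns
the constant.
-/

section Probability

variable {Ω : Type*} [Fintype Ω] {p : Ω → ℝ}

lemma pr_nonneg (hp : ∀ ω, 0 ≤ p ω) (E : Ω → Prop) : 0 ≤ pr p E :=
  Finset.sum_nonneg fun ω _ => ite_nonneg (hp ω) le_rfl

lemma pr_mono (hp : ∀ ω, 0 ≤ p ω) {E F : Ω → Prop} (h : ∀ ω, E ω → F ω) :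
    pr p E ≤ pr p F :=
  Finset.sum_le_sum fun ω _ => by
    by_cases hE : E ω
    · rw [if_pos hE, if_pos (h ω hE)]
    · rw [if_neg hE]
      exact ite_nonneg (hp ω) le_rfl

lemma pr_congr {E F : Ω → Prop} (h : ∀ ω, E ω ↔ F ω) : pr p E = pr p F := by
  simp only [pr, h]

lemma pr_pos_of_imp (hp : ∀ ω, 0 ≤ p ω) {E F : Ω → Prop} (h : ∀ ω, E ω → F ω)
    (hE : 0 < pr p E) : 0 < pr p F :=
  hE.trans_le (pr_mono hp h)

lemma cpr_pos_of_imp (hp : ∀ ω, 0 ≤ p ω) {E F G : Ω → Prop} (h : ∀ ω, G ω → E ω ∧ F ω)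
    (hG : 0 < pr p G) : 0 < cpr p E F :=
  div_pos (pr_pos_of_imp hp h hG) (pr_pos_of_imp hp (fun ω hω => (h ω hω).2) hG)

lemma pr_pos_of_cpr_pos (hp : ∀ ω, 0 ≤ p ω) {E F : Ω → Prop} (h : 0 < cpr p E F) :
    0 < pr p (fun ω => E ω ∧ F ω) :=
  lt_of_not_ge fun hEF => h.not_ge (div_nonpos_of_nonpos_of_nonneg hEF (pr_nonneg hp F))

lemma sum_pr_fiber_and {A : Type*} [Fintype A] (X : Ω → A) (E : Ω → Prop) :
    ∑ a, pr p (fun ω => X ω = a ∧ E ω) = pr p E := by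
  unfold pr
  rw [Finset.sum_comm]
  refine Finset.sum_congr rfl fun ω _ => ?_
  by_cases hE : E ω <;> simp [hE]

lemma sum_cpr_fiber {A : Type*} [Fintype A] (X : Ω → A) {E : Ω → Prop} (hE : pr p E ≠ 0) :
    ∑ a, cpr p (fun ω => X ω = a) E = 1 := by
  simp only [cpr, ← Finset.sum_div, sum_pr_fiber_and, div_self hE]

lemma CondIndepRV.pr_and_mul_pr_and {A B C : Type*} {X : Ω → A} {Y : Ω → B} {Z : Ω → C}
    (hCI : CondIndepRV p X Y Z) (x : A) (y : B) {z : C} (hz : 0 < pr p (fun ω => Z ω = z)) :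
    pr p (fun ω => Z ω = z ∧ X ω = x) * pr p (fun ω => Z ω = z ∧ Y ω = y) =
      pr p (fun ω => Z ω = z) * pr p (fun ω => Z ω = z ∧ X ω = x ∧ Y ω = y) := by
  have h := hCI x y z hz
  simp only [cpr] at h
  rw [pr_congr (fun ω => and_comm (a := X ω = x ∧ Y ω = y)),
    pr_congr (fun ω => and_comm (a := X ω = x)), pr_congr (fun ω => and_comm (a := Y ω = y)),
    div_mul_div_comm, div_eq_div_iff hz.ne' (mul_pos hz hz).ne'] at h
  exact mul_right_cancel₀ hz.ne' (by linarith)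

lemma CondIndepRV.cpr_mul_cpr_div {A B C : Type*} (hp : ∀ ω, 0 ≤ p ω) {X : Ω → A}
    {Y : Ω → B} {Z : Ω → C} (hCI : CondIndepRV p X Y Z) {x : A} {y : B} {z : C}
    (hxyz : 0 < pr p (fun ω => Z ω = z ∧ X ω = x ∧ Y ω = y)) :
    cpr p (fun ω => Z ω = z) (fun ω => X ω = x) * cpr p (fun ω => Z ω = z) (fun ω => Y ω = y) /
        (cpr p (fun ω => Z ω = z) (fun ω => X ω = x ∧ Y ω = y) * pr p (fun ω => Z ω = z)) =
      pr p (fun ω => X ω = x ∧ Y ω = y) / (pr p (fun ω => X ω = x) * pr p (fun ω => Y ω = y)) := by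
  have hz := pr_pos_of_imp hp (fun ω (h : Z ω = z ∧ _) => h.1) hxyz
  have hx := pr_pos_of_imp hp (fun ω (h : Z ω = z ∧ X ω = x ∧ Y ω = y) => h.2.1) hxyz
  have hy := pr_pos_of_imp hp (fun ω (h : Z ω = z ∧ X ω = x ∧ Y ω = y) => h.2.2) hxyz
  have hxy := pr_pos_of_imp hp (fun ω (h : Z ω = z ∧ X ω = x ∧ Y ω = y) => h.2) hxyz
  simp only [cpr]
  field_simp
  linear_combination hCI.pr_and_mul_pr_and x y hz

end Probability

section KL

variable {A : Type*} [Fintype A] {q : A → ℝ}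

lemma sum_ite_pos_mul_eq_of_forall (hq : ∀ a, 0 ≤ q a) (hq1 : ∑ a, q a = 1) {f : A → ℝ} {c : ℝ}
    (hf : ∀ a, 0 < q a → f a = c) : ∑ a, (if 0 < q a then q a * f a else 0) = c := by
  calc ∑ a, (if 0 < q a then q a * f a else 0) = ∑ a, q a * c := by
        refine Finset.sum_congr rfl fun a _ => ?_
        split_ifs with ha
        · rw [hf a ha]
        · rw [le_antisymm (not_lt.mp ha) (hq a), zero_mul]
    _ = c := by rw [← Finset.sum_mul, hq1, one_mul]

lemma klD_sub_klD_sub_klD {r₁ r₂ r₃ : A → ℝ}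
    (hr : ∀ a, 0 < q a → 0 < r₁ a ∧ 0 < r₂ a ∧ 0 < r₃ a) :
    klD q r₁ - klD q r₂ - klD q r₃ =
      ∑ a, if 0 < q a then q a * Real.log (r₂ a * r₃ a / (q a * r₁ a)) else 0 := by
  rw [klD, klD, klD, ← Finset.sum_sub_distrib, ← Finset.sum_sub_distrib]
  refine Finset.sum_congr rfl fun a _ => ?_
  split_ifs with ha
  · obtain ⟨h₁, h₂, h₃⟩ := hr a ha
    rw [Real.log_div (mul_pos h₂ h₃).ne' (mul_pos ha h₁).ne', Real.log_div ha.ne' h₁.ne',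
      Real.log_div ha.ne' h₂.ne', Real.log_div ha.ne' h₃.ne', Real.log_mul h₂.ne' h₃.ne',
      Real.log_mul ha.ne' h₁.ne']
    ring
  · simp

end KL

theorem stmt9_general {Ω W D T : Type*} [Fintype Ω] [Fintype W]
    (p : Ω → ℝ) (hp : ∀ ω, 0 ≤ p ω)
    (Wv : Ω → W) (Dv : Ω → D) (Tv : Ω → T)
    (hCI : CondIndepRV p Dv Tv Wv)
    (d : D) (t : T)
    (hdt : 0 < pr p (fun ω => Dv ω = d ∧ Tv ω = t)) :
    Real.log (pr p (fun ω => Dv ω = d ∧ Tv ω = t) /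
        (pr p (fun ω => Dv ω = d) * pr p (fun ω => Tv ω = t))) =
      klD (fun w => cpr p (fun ω => Wv ω = w) (fun ω => Dv ω = d ∧ Tv ω = t))
          (fun w => pr p (fun ω => Wv ω = w)) -
        klD (fun w => cpr p (fun ω => Wv ω = w) (fun ω => Dv ω = d ∧ Tv ω = t))
          (fun w => cpr p (fun ω => Wv ω = w) (fun ω => Dv ω = d)) -
        klD (fun w => cpr p (fun ω => Wv ω = w) (fun ω => Dv ω = d ∧ Tv ω = t))
          (fun w => cpr p (fun ω => Wv ω = w) (fun ω => Tv ω = t)) := by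
  have hjoint : ∀ w, 0 < cpr p (fun ω => Wv ω = w) (fun ω => Dv ω = d ∧ Tv ω = t) →
      0 < pr p (fun ω => Wv ω = w ∧ Dv ω = d ∧ Tv ω = t) := fun w => pr_pos_of_cpr_pos hp
  rw [klD_sub_klD_sub_klD fun w hw =>
    ⟨pr_pos_of_imp hp (fun ω h => h.1) (hjoint w hw),
      cpr_pos_of_imp hp (fun ω h => ⟨h.1, h.2.1⟩) (hjoint w hw),
      cpr_pos_of_imp hp (fun ω h => ⟨h.1, h.2.2⟩) (hjoint w hw)⟩]
  refine (sum_ite_pos_mul_eq_of_forall (fun w => div_nonneg (pr_nonneg hp _) (pr_nonneg hp _))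
    (sum_cpr_fiber Wv hdt.ne') fun w hw => ?_).symm
  rw [hCI.cpr_mul_cpr_div hp (hjoint w hw)]

theorem stmt9 {Ω W D T : Type*} [Fintype Ω] [Fintype W] [Fintype D] [Fintype T]
    (p : Ω → ℝ) (hp : ∀ ω, 0 ≤ p ω) (hps : ∑ ω, p ω = 1)
    (Wv : Ω → W) (Dv : Ω → D) (Tv : Ω → T)
    (hW : ∀ w, 0 < pr p (fun ω => Wv ω = w))
    (hCI : CondIndepRV p Dv Tv Wv)
    (d : D) (t : T)
    (hd : 0 < pr p (fun ω => Dv ω = d))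
    (ht : 0 < pr p (fun ω => Tv ω = t))
    (hdt : 0 < pr p (fun ω => Dv ω = d ∧ Tv ω = t))
    (hposd : ∀ w, 0 < cpr p (fun ω => Wv ω = w) (fun ω => Dv ω = d ∧ Tv ω = t) →
      0 < cpr p (fun ω => Wv ω = w) (fun ω => Dv ω = d))
    (hpost : ∀ w, 0 < cpr p (fun ω => Wv ω = w) (fun ω => Dv ω = d ∧ Tv ω = t) →
      0 < cpr p (fun ω => Wv ω = w) (fun ω => Tv ω = t)) :
    Real.log (pr p (fun ω => Dv ω = d ∧ Tv ω = t) /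
        (pr p (fun ω => Dv ω = d) * pr p (fun ω => Tv ω = t))) =
      klD (fun w => cpr p (fun ω => Wv ω = w) (fun ω => Dv ω = d ∧ Tv ω = t))
          (fun w => pr p (fun ω => Wv ω = w)) -
        klD (fun w => cpr p (fun ω => Wv ω = w) (fun ω => Dv ω = d ∧ Tv ω = t))
          (fun w => cpr p (fun ω => Wv ω = w) (fun ω => Dv ω = d)) -
        klD (fun w => cpr p (fun ω => Wv ω = w) (fun ω => Dv ω = d ∧ Tv ω = t))
          (fun w => cpr p (fun ω => Wv ω = w) (fun ω => Tv ω = t)) :=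
  stmt9_general p hp Wv Dv Tv hCI d t hdt
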